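/- arXiv:1404.5693 — 3 statements merged into one kernel-verified Lean document; each statement's English description precedes it below -/
import Mathlib

section
/- Let n ≥ 2 be an integer and let f : [0,∞) → [0,∞) be a nonincreasing (antitone) function. Then for every s ≥ 0, ( ∫₀^s f(t)^((n−1)/n) dt )^(n/(n−1)) ≥ (n/(n−1)) · ∫₀^s t^(1/(n−1)) f(t) dt. -/
open MeasureTheory Set
open Function (rightLim)

/-!
Put `c = (n-1)/n` and `p = 1/c = n/(n-1)`, so that `1/(n-1) = p - 1`, and let `g = f ^ c`, which
is antitone. With `F(x) = ∫₀^x g`, monotonicity gives `x g(x) ≤ F(x)`, hence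
`p x^(p-1) g(x)^p = p (x g(x))^(p-1) g(x) ≤ p F(x)^(p-1) g(x)`, and the right-hand side is the
derivative of `F^p`. Integrating from `0` to `s` gives `p ∫₀^s t^(p-1) f(t) dt ≤ F(s)^p`.
Since `g` need not be continuous, the derivative of `F` is taken from the right, where it is the
right limit of `g`; that right limit agrees with `g` off the countably many jumps of `g`.
-/

namespace Antitone

variable {g : ℝ → ℝ}

theorem rightLim_ae_eq (hg : Antitone g) (μ : Measure ℝ) [NullSingletonClass μ] :
    rightLim g =ᵐ[μ] g := by
  filter_upwards [hg.countable_not_continuousAt.ae_notMem μ] with x hx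
  exact (not_not.mp hx).continuousWithinAt.rightLim_eq

theorem hasDerivWithinAt_integral_rightLim (hg : Antitone g) (a x : ℝ) :
    HasDerivWithinAt (fun u => ∫ t in a..u, g t) (rightLim g x) (Ioi x) x :=
  (intervalIntegral.integral_hasDerivWithinAt_of_tendsto_ae_right (s := Ici x) (t := Ioi x)
    hg.intervalIntegrable hg.measurable.aestronglyMeasurable.stronglyMeasurableAtFilter
    ((hg.tendsto_rightLim x).mono_left inf_le_left)).mono Ioi_subset_Ici_self

theorem sub_mul_le_integral (hg : Antitone g) {a b : ℝ} (hab : a ≤ b) :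
    (b - a) * g b ≤ ∫ t in a..b, g t := by
  have h := intervalIntegral.integral_mono_on hab (intervalIntegrable_const (μ := volume))
    hg.intervalIntegrable fun t ht => hg ht.2
  rwa [intervalIntegral.integral_const, smul_eq_mul] at h

end Antitone

theorem Real.rpow_sub_one_mul_rpow_le {x y z p : ℝ} (hx : 0 ≤ x) (hy : 0 ≤ y) (hxyz : x * y ≤ z)
    (hp : 1 ≤ p) : x ^ (p - 1) * y ^ p ≤ z ^ (p - 1) * y := by
  have hsplit : y ^ p = y ^ (p - 1) * y := by
    simpa using Real.rpow_add' hy (y := p - 1) (z := 1) (by linarith)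
  calc x ^ (p - 1) * y ^ p = (x * y) ^ (p - 1) * y := by
        rw [hsplit, Real.mul_rpow hx hy, mul_assoc]
    _ ≤ z ^ (p - 1) * y := by gcongr

theorem Antitone.mul_integral_mul_rpow_le_rpow_integral {g : ℝ → ℝ} (hg : Antitone g)
    (hg0 : ∀ t, 0 ≤ g t) {p : ℝ} (hp : 1 ≤ p) {s : ℝ} (hs : 0 ≤ s) :
    p * ∫ t in (0:ℝ)..s, t ^ (p - 1) * g t ^ p ≤ (∫ t in (0:ℝ)..s, g t) ^ p := by
  set F : ℝ → ℝ := fun u => ∫ t in (0:ℝ)..u, g t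
  set G := rightLim g
  have hp0 : 0 < p := by linarith
  have hG0 : ∀ x, 0 ≤ G x := fun x => (hg0 _).trans (hg.le_rightLim (lt_add_one x))
  have hG_le_F : ∀ x, 0 ≤ x → x * G x ≤ F x := fun x hx => by
    have h := hg.sub_mul_le_integral hx
    rw [sub_zero] at h
    exact (mul_le_mul_of_nonneg_left (hg.rightLim_le le_rfl) hx).trans h
  have hint : ∫ t in (0:ℝ)..s, t ^ (p - 1) * g t ^ p = ∫ t in (0:ℝ)..s, t ^ (p - 1) * G t ^ p :=
    intervalIntegral.integral_congr_ae <| by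
      filter_upwards [hg.rightLim_ae_eq volume] with t ht _ using by simp only [G, ht]
  have hFp_cont : ContinuousOn (fun u => F u ^ p) (Icc 0 s) :=
    (intervalIntegral.continuous_primitive (fun _ _ => hg.intervalIntegrable) 0).continuousOn
      |>.rpow_const fun _ _ => Or.inr hp0.le
  have hFp_deriv : ∀ x ∈ Ioo 0 s,
      HasDerivWithinAt (fun u => F u ^ p) (G x * p * F x ^ (p - 1)) (Ioi x) x := fun x _ =>
    (hg.hasDerivWithinAt_integral_rightLim 0 x).rpow_const (Or.inr hp)
  have hintegrable : IntegrableOn (fun t => p * (t ^ (p - 1) * G t ^ p)) (Icc 0 s) := by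
    have hGp : Antitone fun t => G t ^ p := fun x y h =>
      Real.rpow_le_rpow (hG0 y) (hg.rightLim h) hp0.le
    refine (intervalIntegrable_iff_integrableOn_Icc_of_le hs).mp (.const_mul ?_ p)
    exact hGp.intervalIntegrable.continuousOn_mul fun x _ =>
      (Real.continuousAt_rpow_const x _ (Or.inr (by linarith))).continuousWithinAt
  have hpointwise : ∀ x ∈ Ioo 0 s, p * (x ^ (p - 1) * G x ^ p) ≤ G x * p * F x ^ (p - 1) :=
    fun x hx => by
      have := mul_le_mul_of_nonneg_left
        (Real.rpow_sub_one_mul_rpow_le hx.1.le (hG0 x) (hG_le_F x hx.1.le) hp) hp0.le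
      linarith
  have hmain := intervalIntegral.integral_le_sub_of_hasDeriv_right_of_le hs hFp_cont hFp_deriv
    hintegrable hpointwise
  simpa [hint, intervalIntegral.integral_const_mul, F, Real.zero_rpow hp0.ne'] using hmain

theorem AntitoneOn.mul_integral_mul_le_rpow_integral_rpow_inv {f : ℝ → ℝ}
    (hf_nonneg : ∀ t, 0 ≤ t → 0 ≤ f t) (hf_anti : AntitoneOn f (Ici 0)) {p : ℝ} (hp : 1 ≤ p)
    {s : ℝ} (hs : 0 ≤ s) :
    p * ∫ t in (0:ℝ)..s, t ^ (p - 1) * f t ≤ (∫ t in (0:ℝ)..s, f t ^ p⁻¹) ^ p := by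
  set g : ℝ → ℝ := fun t => f (max t 0) ^ p⁻¹
  have hg : Antitone g := fun x y hxy =>
    Real.rpow_le_rpow (hf_nonneg _ (le_max_right _ _))
      (hf_anti (mem_Ici.2 (le_max_right _ _)) (mem_Ici.2 (le_max_right _ _))
        (max_le_max_right 0 hxy))
      (inv_nonneg.2 (by linarith))
  have hg_eq : ∀ t ∈ uIcc 0 s, g t = f t ^ p⁻¹ := fun t ht => by
    rw [uIcc_of_le hs] at ht
    simp only [g, max_eq_left ht.1]
  have hgp_eq : ∀ t ∈ uIcc 0 s, g t ^ p = f t := fun t ht => by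
    rw [hg_eq t ht, Real.rpow_inv_rpow (hf_nonneg t (uIcc_of_le hs ▸ ht).1) (by linarith)]
  have key := hg.mul_integral_mul_rpow_le_rpow_integral
    (fun t => Real.rpow_nonneg (hf_nonneg _ (le_max_right _ _)) _) hp hs
  rwa [intervalIntegral.integral_congr hg_eq,
    intervalIntegral.integral_congr (g := fun t => t ^ (p - 1) * f t) fun t ht => by
      simp only [hgp_eq t ht]] at key

/-- Key integral inequality in the proof of the Federer–Fleming type inequality:
for a nonincreasing nonnegative `f` on `[0,∞)`, every integer `n ≥ 2` and every `s ≥ 0`,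
`(∫₀^s f(t)^((n−1)/n) dt)^(n/(n−1)) ≥ (n/(n−1)) ∫₀^s t^(1/(n−1)) f(t) dt`. -/
theorem integral_antitone_rpow_ineq (n : ℕ) (hn : 2 ≤ n) (f : ℝ → ℝ)
    (hf_nonneg : ∀ t : ℝ, 0 ≤ t → 0 ≤ f t)
    (hf_anti : AntitoneOn f (Set.Ici (0 : ℝ)))
    (s : ℝ) (hs : 0 ≤ s) :
    (∫ t in (0:ℝ)..s, (f t) ^ (((n : ℝ) - 1) / n)) ^ ((n : ℝ) / ((n : ℝ) - 1)) ≥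
      ((n : ℝ) / ((n : ℝ) - 1)) * ∫ t in (0:ℝ)..s, t ^ (1 / ((n : ℝ) - 1)) * f t := by
  have hn1 : (0 : ℝ) < n - 1 := by
    have : (2 : ℝ) ≤ n := by exact_mod_cast hn
    linarith
  have hp : 1 ≤ (n : ℝ) / (n - 1) := by rw [le_div_iff₀ hn1]; linarith
  have hp_sub : 1 / ((n : ℝ) - 1) = n / (n - 1) - 1 := by field_simp; ring
  rw [ge_iff_le, hp_sub, ← inv_div (n : ℝ)]
  exact hf_anti.mul_integral_mul_le_rpow_integral_rpow_inv hf_nonneg hp hs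
end

section
/- Let n ≥ 2, let F be the Funk metric on the open unit ball of ℝⁿ, and let 0 < r < 1. Then the uniformity constant of F restricted to the closed ball {|x| ≤ r} equals ((1+r)/(1−r))²; that is, the supremum of g_{(x,X)}(Y,Y) / g_{(x,Z)}(Y,Y) over all x with |x| ≤ r and all X, Y, Z ∈ ℝⁿ \ {0} with F(x,X) = F(x,Y) = F(x,Z) = 1 equals ((1+r)/(1−r))². -/
/-- The Funk metric on the open unit ball of `ℝⁿ`. -/
noncomputable def funk (n : ℕ) (x y : EuclideanSpace ℝ (Fin n)) : ℝ :=
  (Real.sqrt ((1 - ‖x‖ ^ 2) * ‖y‖ ^ 2 + (inner ℝ x y : ℝ) ^ 2) + (inner ℝ x y : ℝ)) /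
    (1 - ‖x‖ ^ 2)

/-- The fundamental tensor of the Funk metric:
`g_{(x,y)}(u,v) = (1/2)·D²(F(x,·)²)(y)[u,v]`. -/
noncomputable def funkG (n : ℕ) (x y u v : EuclideanSpace ℝ (Fin n)) : ℝ :=
  (1 / 2) * (fderiv ℝ (fun z => (fderiv ℝ (fun w => (funk n x w) ^ 2) z) v) y) u

/-!
Write `A = 1 - ‖x‖²` and `Q(y) = A‖y‖² + ⟪x, y⟫²`, the quadratic form of a bilinear form
`B = funkForm x`, so that `F = (√Q + ⟪x, ·⟫) / A`. The fundamental tensor is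
`g_y = dF ⊗ dF + F · Hess F`, and for `F(y) = 1`, with `q = √Q(y)` and `T = B(y, u) / q`,
`A² g_y(u, u) = (T + ⟪x, u⟫)² + (A / q) (Q(u) - T²)`.
Cauchy–Schwarz for `B` gives `T² ≤ Q(u)`, Cauchy–Schwarz in `E` gives `⟪x, u⟫² ≤ ‖x‖² Q(u)`, and
`F(y) = 1` forces `A / q ∈ [1 - ‖x‖, 1 + ‖x‖]`; hence `A² g_y(u, u)` lies between `(1 ∓ ‖x‖)² Q(u)`,
and the ratio is at most `((1 + ‖x‖) / (1 - ‖x‖))²`. For `x = r e` the unit vectors `X = (1 - r) e`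
and `Z = -(1 + r) e` are negative multiples of each other, so homogeneity gives `g_X(X, X) = 1` and
`g_Z(X, X) = ((1 - r) / (1 + r))²`: the bound is attained.
-/

open Topology RealInnerProductSpace

lemma one_sub_sq_mul_le_sq_add_add_mul_sub {b c M t w : ℝ} (hb : 0 ≤ b) (hb1 : b ≤ 1)
    (hc : 1 - b ≤ c) (ht : t ^ 2 ≤ M) (hw : w ^ 2 ≤ b ^ 2 * M) :
    (1 - b) ^ 2 * M ≤ (t + w) ^ 2 + c * (M - t ^ 2) := by
  have hc' : (1 - b) * (M - t ^ 2) ≤ c * (M - t ^ 2) :=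
    mul_le_mul_of_nonneg_right hc (sub_nonneg.2 ht)
  -- `b ((t + w)² + (1 - b)(M - t²) - (1 - b)² M) = (b t + w)² + (1 - b)(b² M - w²)`
  rcases hb.eq_or_lt with rfl | hb
  · nlinarith
  · nlinarith [sq_nonneg (b * t + w), mul_nonneg (sub_nonneg.2 hb1) (sub_nonneg.2 hw)]

lemma sq_add_add_mul_sub_le_one_add_sq_mul {b c M t w : ℝ} (hb : 0 ≤ b) (hc : c ≤ 1 + b)
    (ht : t ^ 2 ≤ M) (hw : w ^ 2 ≤ b ^ 2 * M) :
    (t + w) ^ 2 + c * (M - t ^ 2) ≤ (1 + b) ^ 2 * M := by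
  have hc' : c * (M - t ^ 2) ≤ (1 + b) * (M - t ^ 2) :=
    mul_le_mul_of_nonneg_right hc (sub_nonneg.2 ht)
  -- `b ((1 + b)² M - (t + w)² - (1 + b)(M - t²)) = (b t - w)² + (1 + b)(b² M - w²)`
  rcases hb.eq_or_lt with rfl | hb
  · nlinarith
  · nlinarith [sq_nonneg (b * t - w), mul_nonneg (by linarith : 0 ≤ 1 + b) (sub_nonneg.2 hw)]

lemma div_le_sq_div_of_le_of_le {b c g₁ g₂ : ℝ} (hb : b < 1) (hc : 0 < c)
    (h₁ : g₁ ≤ (1 + b) ^ 2 * c) (h₂ : (1 - b) ^ 2 * c ≤ g₂) :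
    g₁ / g₂ ≤ ((1 + b) / (1 - b)) ^ 2 := by
  have hb' : 0 < (1 - b) ^ 2 := by nlinarith
  calc g₁ / g₂ ≤ (1 + b) ^ 2 * c / ((1 - b) ^ 2 * c) :=
        div_le_div₀ (by positivity) h₁ (by positivity) h₂
    _ = ((1 + b) / (1 - b)) ^ 2 := by rw [mul_div_mul_right _ _ hc.ne', div_pow]

lemma one_sub_norm_sq_pos {E : Type*} [SeminormedAddCommGroup E] {x : E} (hx : ‖x‖ < 1) :
    0 < 1 - ‖x‖ ^ 2 :=
  sub_pos.2 (pow_lt_one₀ (norm_nonneg x) hx two_ne_zero)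

section FunkForm

variable {E : Type*} [NormedAddCommGroup E] [InnerProductSpace ℝ E] {x y : E}

/-- The bilinear form whose quadratic form `(1 - ‖x‖²)‖y‖² + ⟪x, y⟫²` is the radicand of the
Funk metric at `x`. -/
noncomputable def funkForm (x u : E) : E →L[ℝ] ℝ :=
  (1 - ‖x‖ ^ 2) • innerSL ℝ u + ⟪x, u⟫ • innerSL ℝ x

lemma funkForm_apply (x u v : E) :
    funkForm x u v = (1 - ‖x‖ ^ 2) * ⟪u, v⟫ + ⟪x, u⟫ * ⟪x, v⟫ := by
  simp [funkForm]

lemma funkForm_comm (x u v : E) : funkForm x u v = funkForm x v u := by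
  simp only [funkForm_apply, real_inner_comm u v]; ring

lemma funkForm_self (x y : E) : funkForm x y y = (1 - ‖x‖ ^ 2) * ‖y‖ ^ 2 + ⟪x, y⟫ ^ 2 := by
  rw [funkForm_apply, real_inner_self_eq_norm_sq, sq ⟪x, y⟫]

lemma funkForm_smul (x u : E) (s : ℝ) : funkForm x (s • u) = s • funkForm x u := by
  ext v
  simp only [funkForm_apply, real_inner_smul_left, real_inner_smul_right, smul_apply, smul_eq_mul]
  ring

lemma funkForm_self_pos (hx : ‖x‖ < 1) (hy : y ≠ 0) : 0 < funkForm x y y := by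
  rw [funkForm_self]
  have := mul_pos (one_sub_norm_sq_pos hx) (pow_pos (norm_pos_iff.2 hy) 2)
  positivity

lemma funkForm_self_nonneg (hx : ‖x‖ ≤ 1) (y : E) : 0 ≤ funkForm x y y := by
  have hA : 0 ≤ 1 - ‖x‖ ^ 2 := sub_nonneg.2 (pow_le_one₀ (norm_nonneg x) hx)
  rw [funkForm_self]
  positivity

lemma sq_funkForm_le (hx : ‖x‖ ≤ 1) (u v : E) :
    funkForm x u v ^ 2 ≤ funkForm x u u * funkForm x v v := by
  have hquad (t : ℝ) : 0 ≤ funkForm x v v * (t * t) + 2 * funkForm x u v * t + funkForm x u u := by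
    have := funkForm_self_nonneg hx (t • v + u)
    simp only [funkForm_apply, inner_add_left, inner_add_right, real_inner_smul_left,
      real_inner_smul_right, real_inner_comm u v] at this ⊢
    linarith
  have := discrim_le_zero hquad
  rw [discrim] at this
  linarith

lemma inner_sq_le_norm_sq_mul_funkForm (hx : ‖x‖ ≤ 1) (y : E) :
    ⟪x, y⟫ ^ 2 ≤ ‖x‖ ^ 2 * funkForm x y y := by
  have hA : 0 ≤ 1 - ‖x‖ ^ 2 := sub_nonneg.2 (pow_le_one₀ (norm_nonneg x) hx)
  have hcs : ⟪x, y⟫ ^ 2 ≤ ‖x‖ ^ 2 * ‖y‖ ^ 2 := by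
    rw [← mul_pow]; exact sq_le_sq' (abs_le.1 (abs_real_inner_le_norm x y)).1 (real_inner_le_norm x y)
  rw [funkForm_self]
  nlinarith [mul_le_mul_of_nonneg_left hcs hA]

lemma hasFDerivAt_funkForm_left (x v y : E) :
    HasFDerivAt (fun z => funkForm x z v) (funkForm x v) y := by
  simp only [funkForm_comm x _ v]
  exact (funkForm x v).hasFDerivAt

lemma hasFDerivAt_funkForm_self (x y : E) :
    HasFDerivAt (fun z => funkForm x z z) (2 • funkForm x y) y := by
  have h : HasFDerivAt (fun z => (1 - ‖x‖ ^ 2) * ‖z‖ ^ 2 + ⟪x, z⟫ ^ 2) _ y :=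
    ((hasStrictFDerivAt_norm_sq y).hasFDerivAt.const_mul _).add
      (((innerSL ℝ x).hasFDerivAt (x := y)).pow 2)
  refine (h.congr_fderiv ?_).congr_of_eventuallyEq (.of_forall fun z => funkForm_self x z)
  ext v
  simp only [coe_innerSL_apply, Nat.add_one_sub_one, pow_one, nsmul_eq_mul, Nat.cast_ofNat, add_apply,
    smul_apply, smul_eq_mul, funkForm_apply, smul_add]
  ring

lemma hasFDerivAt_sqrt_funkForm_self (hx : ‖x‖ < 1) (hy : y ≠ 0) :
    HasFDerivAt (fun z => √(funkForm x z z)) ((√(funkForm x y y))⁻¹ • funkForm x y) y := by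
  have h := (hasFDerivAt_funkForm_self x y).sqrt (funkForm_self_pos hx hy).ne'
  convert h using 1
  ext v
  simp only [smul_apply, smul_eq_mul, one_div, mul_inv_rev, nsmul_eq_mul, Nat.cast_ofNat]
  field_simp

end FunkForm

/-- For `f = F(x, ·)` this is the identity `g_y = dF ⊗ dF + F · Hess F` for the fundamental
tensor. -/
lemma fderiv_fderiv_sq_apply {E : Type*} [NormedAddCommGroup E] [NormedSpace ℝ E] {f : E → ℝ}
    {y v : E} {φ' : E →L[ℝ] ℝ} (hf : ∀ᶠ z in 𝓝 y, DifferentiableAt ℝ f z)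
    (hφ : HasFDerivAt (fun z => fderiv ℝ f z v) φ' y) (u : E) :
    fderiv ℝ (fun z => fderiv ℝ (fun w => f w ^ 2) z v) y u
      = 2 * (fderiv ℝ f y u * fderiv ℝ f y v + f y * φ' u) := by
  have hsq : (fun z => fderiv ℝ (fun w => f w ^ 2) z v) =ᶠ[𝓝 y]
      fun z => 2 * f z * fderiv ℝ f z v := by
    filter_upwards [hf] with z hz
    simp [(hz.hasFDerivAt.pow 2).fderiv]
  rw [hsq.fderiv_eq, ((hf.self_of_nhds.hasFDerivAt.const_mul 2).fun_mul hφ).fderiv]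
  simp only [add_apply, smul_apply, smul_eq_mul]
  ring

section Funk

variable {n : ℕ} {x y : EuclideanSpace ℝ (Fin n)}

lemma funk_eq (n : ℕ) (x y : EuclideanSpace ℝ (Fin n)) :
    funk n x y = (√(funkForm x y y) + ⟪x, y⟫) / (1 - ‖x‖ ^ 2) := by
  rw [funkForm_self]; rfl

lemma ne_zero_of_funk_eq_one (h : funk n x y = 1) : y ≠ 0 := by
  rintro rfl
  simp [funk] at h

lemma hasFDerivAt_funk (hx : ‖x‖ < 1) (hy : y ≠ 0) :
    HasFDerivAt (funk n x)
      ((1 - ‖x‖ ^ 2)⁻¹ • ((√(funkForm x y y))⁻¹ • funkForm x y + innerSL ℝ x)) y := by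
  have h := ((hasFDerivAt_sqrt_funkForm_self hx hy).add (innerSL ℝ x).hasFDerivAt).const_mul
    (1 - ‖x‖ ^ 2)⁻¹
  refine (h.congr_fderiv ?_).congr_of_eventuallyEq (.of_forall fun z => ?_)
  · ext; simp
  · rw [funk_eq, div_eq_inv_mul]; rfl

lemma fderiv_funk_apply (hx : ‖x‖ < 1) (hy : y ≠ 0) (v : EuclideanSpace ℝ (Fin n)) :
    fderiv ℝ (funk n x) y v = (funkForm x y v / √(funkForm x y y) + ⟪x, v⟫) / (1 - ‖x‖ ^ 2) := by
  rw [(hasFDerivAt_funk hx hy).fderiv]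
  simp [div_eq_inv_mul, mul_add]

lemma fderiv_funk_apply_self (hx : ‖x‖ < 1) (hy : y ≠ 0) :
    fderiv ℝ (funk n x) y y = funk n x y := by
  rw [fderiv_funk_apply hx hy, Real.div_sqrt, funk_eq]

lemma hasFDerivAt_fderiv_funk_apply (hx : ‖x‖ < 1) (hy : y ≠ 0) (v : EuclideanSpace ℝ (Fin n)) :
    HasFDerivAt (fun z => fderiv ℝ (funk n x) z v)
      ((1 - ‖x‖ ^ 2)⁻¹ • ((√(funkForm x y y))⁻¹ • funkForm x v
        - (funkForm x y v / √(funkForm x y y) ^ 3) • funkForm x y)) y := by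
  have hq := (Real.sqrt_pos.2 (funkForm_self_pos hx hy)).ne'
  have hinv := (hasDerivAt_inv hq).comp_hasFDerivAt y (hasFDerivAt_sqrt_funkForm_self hx hy)
  have h := (((hasFDerivAt_funkForm_left x v y).mul hinv).add_const ⟪x, v⟫).const_mul
    (1 - ‖x‖ ^ 2)⁻¹
  have heq : (fun z => fderiv ℝ (funk n x) z v) =ᶠ[𝓝 y]
      fun z => (1 - ‖x‖ ^ 2)⁻¹ * (funkForm x z v * (√(funkForm x z z))⁻¹ + ⟪x, v⟫) := by
    filter_upwards [isOpen_ne.mem_nhds hy] with z hz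
    rw [fderiv_funk_apply hx hz, div_eq_inv_mul, div_eq_mul_inv]
  refine (h.congr_fderiv ?_).congr_of_eventuallyEq heq
  ext u
  simp only [neg_smul, smul_neg, Function.comp_apply, smul_add, add_apply, neg_apply, smul_apply,
    smul_eq_mul, sub_apply]
  field_simp
  ring

lemma funkG_eq (hx : ‖x‖ < 1) (hy : y ≠ 0) (u v : EuclideanSpace ℝ (Fin n)) :
    funkG n x y u v = fderiv ℝ (funk n x) y u * fderiv ℝ (funk n x) y v
      + funk n x y * ((funkForm x v u - funkForm x y u * funkForm x y v / funkForm x y y)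
        / ((1 - ‖x‖ ^ 2) * √(funkForm x y y))) := by
  have hdiff : ∀ᶠ z in 𝓝 y, DifferentiableAt ℝ (funk n x) z := by
    filter_upwards [isOpen_ne.mem_nhds hy] with z hz
    exact (hasFDerivAt_funk hx hz).differentiableAt
  rw [funkG, fderiv_fderiv_sq_apply hdiff (hasFDerivAt_fderiv_funk_apply hx hy v), one_div,
    inv_mul_cancel_left₀ two_ne_zero]
  congr 2
  have hQ := funkForm_self_pos hx hy
  set q := √(funkForm x y y)
  have hQq : funkForm x y y = q ^ 2 := (Real.sq_sqrt hQ.le).symm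
  have hq0 : 0 < q := Real.sqrt_pos.2 hQ
  simp only [smul_apply, sub_apply, smul_eq_mul, hQq]
  field_simp

lemma funkG_smul_self (hx : ‖x‖ < 1) (hy : y ≠ 0) (s : ℝ) :
    funkG n x y (s • y) (s • y) = s ^ 2 * funk n x y ^ 2 := by
  rw [funkG_eq hx hy, funkForm_smul]
  simp only [map_smul, smul_apply, smul_eq_mul, fderiv_funk_apply_self hx hy]
  field_simp
  ring

lemma div_sqrt_funkForm_mem_Icc (hx : ‖x‖ < 1) (hy : funk n x y = 1) :
    (1 - ‖x‖ ^ 2) / √(funkForm x y y) ∈ Set.Icc (1 - ‖x‖) (1 + ‖x‖) := by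
  have hq := Real.sqrt_pos.2 (funkForm_self_pos hx (ne_zero_of_funk_eq_one hy))
  have hA := one_sub_norm_sq_pos hx
  have hp : ⟪x, y⟫ = 1 - ‖x‖ ^ 2 - √(funkForm x y y) := by
    rw [funk_eq, div_eq_one_iff_eq hA.ne'] at hy
    linarith
  have hcs := inner_sq_le_norm_sq_mul_funkForm hx.le y
  set q := √(funkForm x y y)
  rw [hp, ← Real.sq_sqrt (funkForm_self_nonneg hx.le y), ← mul_pow] at hcs
  obtain ⟨hlo, hhi⟩ := abs_le_of_sq_le_sq' hcs (by positivity)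
  constructor
  · rw [le_div_iff₀ hq]; nlinarith
  · rw [div_le_iff₀ hq]; nlinarith

lemma funkG_bounds (hx : ‖x‖ < 1) (hy : funk n x y = 1) (u : EuclideanSpace ℝ (Fin n)) :
    (1 - ‖x‖) ^ 2 * funkForm x u u ≤ (1 - ‖x‖ ^ 2) ^ 2 * funkG n x y u u ∧
      (1 - ‖x‖ ^ 2) ^ 2 * funkG n x y u u ≤ (1 + ‖x‖) ^ 2 * funkForm x u u := by
  have hy0 := ne_zero_of_funk_eq_one hy
  have hQ := funkForm_self_pos hx hy0
  have hA := one_sub_norm_sq_pos hx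
  obtain ⟨hclo, hchi⟩ := div_sqrt_funkForm_mem_Icc hx hy
  set q := √(funkForm x y y)
  have hq : 0 < q := Real.sqrt_pos.2 hQ
  have hQq : funkForm x y y = q ^ 2 := (Real.sq_sqrt hQ.le).symm
  have hT : (funkForm x y u / q) ^ 2 ≤ funkForm x u u := by
    rw [div_pow, ← hQq, div_le_iff₀ hQ, mul_comm]
    exact sq_funkForm_le hx.le y u
  have hw := inner_sq_le_norm_sq_mul_funkForm hx.le u
  have key : (1 - ‖x‖ ^ 2) ^ 2 * funkG n x y u u = (funkForm x y u / q + ⟪x, u⟫) ^ 2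
      + (1 - ‖x‖ ^ 2) / q * (funkForm x u u - (funkForm x y u / q) ^ 2) := by
    rw [funkG_eq hx hy0, fderiv_funk_apply hx hy0, hy, hQq, Real.sqrt_sq hq.le]
    field_simp
  rw [key]
  exact ⟨one_sub_sq_mul_le_sq_add_add_mul_sub (norm_nonneg x) hx.le hclo hT hw,
    sq_add_add_mul_sub_le_one_add_sq_mul (norm_nonneg x) hchi hT hw⟩

lemma funkG_div_funkG_le (hx : ‖x‖ < 1) {X Y Z : EuclideanSpace ℝ (Fin n)}
    (hX : funk n x X = 1) (hZ : funk n x Z = 1) (hY : Y ≠ 0) :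
    funkG n x X Y Y / funkG n x Z Y Y ≤ ((1 + ‖x‖) / (1 - ‖x‖)) ^ 2 := by
  have hA : (1 - ‖x‖ ^ 2) ^ 2 ≠ 0 := pow_ne_zero 2 (one_sub_norm_sq_pos hx).ne'
  rw [← mul_div_mul_left _ _ hA]
  exact div_le_sq_div_of_le_of_le hx (funkForm_self_pos hx hY) (funkG_bounds hx hX Y).2
    (funkG_bounds hx hZ Y).1

lemma funk_smul_smul {e : EuclideanSpace ℝ (Fin n)} (he : ‖e‖ = 1) (r a : ℝ) :
    funk n (r • e) (a • e) = (|a| + r * a) / (1 - r ^ 2) := by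
  have hee : ⟪e, e⟫ = 1 := by rw [real_inner_self_eq_norm_sq, he, one_pow]
  simp only [funk, norm_smul, he, real_inner_smul_left, real_inner_smul_right, hee,
    Real.norm_eq_abs, mul_one, sq_abs]
  rw [show (1 - r ^ 2) * a ^ 2 + (a * r) ^ 2 = a ^ 2 by ring, Real.sqrt_sq_eq_abs, mul_comm a r]

lemma exists_funkG_div_funkG_eq [NeZero n] {r : ℝ} (hr0 : 0 ≤ r) (hr1 : r < 1) :
    ∃ x X Z : EuclideanSpace ℝ (Fin n), ‖x‖ = r ∧ funk n x X = 1 ∧ funk n x Z = 1 ∧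
      funkG n x X X X / funkG n x Z X X = ((1 + r) / (1 - r)) ^ 2 := by
  obtain ⟨e, he⟩ := exists_norm_eq (EuclideanSpace ℝ (Fin n)) zero_le_one
  have hA : 1 - r ^ 2 ≠ 0 := by nlinarith
  have hX : funk n (r • e) ((1 - r) • e) = 1 := by
    rw [funk_smul_smul he, abs_of_pos (by linarith)]
    field_simp
    ring
  have hZ : funk n (r • e) (-(1 + r) • e) = 1 := by
    rw [funk_smul_smul he, abs_of_neg (by linarith)]
    field_simp
    ring
  have hXZ : (1 - r) • e = (-((1 - r) / (1 + r))) • -(1 + r) • e := by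
    rw [smul_smul]
    congr 1
    field_simp
  have hxr : ‖r • e‖ = r := by rw [norm_smul, he, Real.norm_of_nonneg hr0, mul_one]
  have hx : ‖r • e‖ < 1 := hxr.trans_lt hr1
  have hgX : funkG n (r • e) ((1 - r) • e) ((1 - r) • e) ((1 - r) • e) = 1 := by
    simpa [hX] using funkG_smul_self hx (ne_zero_of_funk_eq_one hX) 1
  have hgZ : funkG n (r • e) (-(1 + r) • e) ((1 - r) • e) ((1 - r) • e)
      = ((1 - r) / (1 + r)) ^ 2 := by
    rw [hXZ, funkG_smul_self hx (ne_zero_of_funk_eq_one hZ), hZ]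
    ring
  refine ⟨r • e, _, _, hxr, hX, hZ, ?_⟩
  rw [hgX, hgZ]
  field_simp

end Funk

/-- The uniformity constant of the Funk metric on the closed ball of radius `r` equals
`((1+r)/(1−r))²`: the supremum of `g_{(x,X)}(Y,Y)/g_{(x,Z)}(Y,Y)` over `|x| ≤ r` and
`F`-unit vectors `X, Y, Z` equals `((1+r)/(1−r))²`. -/
theorem funk_uniformity_constant (n : ℕ) (hn : 2 ≤ n) (r : ℝ) (hr0 : 0 < r) (hr1 : r < 1) :
    IsLUB { t : ℝ | ∃ x X Y Z : EuclideanSpace ℝ (Fin n),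
        ‖x‖ ≤ r ∧ X ≠ 0 ∧ Y ≠ 0 ∧ Z ≠ 0 ∧
        funk n x X = 1 ∧ funk n x Y = 1 ∧ funk n x Z = 1 ∧
        t = funkG n x X Y Y / funkG n x Z Y Y }
      (((1 + r) / (1 - r)) ^ 2) := by
  refine ⟨?_, fun c hc => ?_⟩
  · rintro t ⟨x, X, Y, Z, hxr, -, hY, -, hX, -, hZ, rfl⟩
    have hx : ‖x‖ < 1 := hxr.trans_lt hr1
    have : 0 < 1 - ‖x‖ := by linarith
    calc funkG n x X Y Y / funkG n x Z Y Y ≤ ((1 + ‖x‖) / (1 - ‖x‖)) ^ 2 :=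
          funkG_div_funkG_le hx hX hZ hY
      _ ≤ ((1 + r) / (1 - r)) ^ 2 := by gcongr
  · have : NeZero n := ⟨by omega⟩
    obtain ⟨x, X, Z, hx, hX, hZ, hratio⟩ := exists_funkG_div_funkG_eq (n := n) hr0.le hr1
    have hX0 := ne_zero_of_funk_eq_one hX
    exact hc ⟨x, X, X, Z, hx.le, hX0, hX0, ne_zero_of_funk_eq_one hZ, hX, hX, hZ, hratio.symm⟩
end

section
/- Let n ≥ 2, let F be the Funk metric on the open unit ball of ℝⁿ, and let 0 < r < 1. For p, q in the closed ball {|x| ≤ r}, define the (nonsymmetric) Funk distance d(p,q) as the infimum of ∫₀¹ F(γ(t), γ′(t)) dt over all piecewise C¹ curves γ : [0,1] → {|x| ≤ r} with γ(0) = p and γ(1) = q. Then the diameter sup_{|p| ≤ r, |q| ≤ r} d(p,q) equals log((1+r)/(1−r)). -/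
open MeasureTheory

/-- `γ : ℝ → E` is piecewise `C¹` on `[0,1]`: there is a finite partition
`0 = τ₀ < τ₁ < ⋯ < τ_k = 1` such that `γ` is `C¹` on each `[τᵢ, τᵢ₊₁]`. -/
def PiecewiseC1 {E : Type*} [NormedAddCommGroup E] [NormedSpace ℝ E] (γ : ℝ → E) : Prop :=
  ∃ (k : ℕ) (τ : ℕ → ℝ), 0 < k ∧ τ 0 = 0 ∧ τ k = 1 ∧
    (∀ i < k, τ i < τ (i + 1)) ∧
    ∀ i < k, ContDiffOn ℝ 1 γ (Set.Icc (τ i) (τ (i + 1)))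

/-- The (nonsymmetric) Funk distance on the closed ball of radius `r`: the infimum of
`∫₀¹ F(γ(t), γ′(t)) dt` over piecewise `C¹` curves in `{|x| ≤ r}` from `p` to `q`. -/
noncomputable def funkDist (n : ℕ) (r : ℝ) (p q : EuclideanSpace ℝ (Fin n)) : ℝ :=
  sInf { L : ℝ | ∃ γ : ℝ → EuclideanSpace ℝ (Fin n), PiecewiseC1 γ ∧
    (∀ t ∈ Set.Icc (0 : ℝ) 1, ‖γ t‖ ≤ r) ∧ γ 0 = p ∧ γ 1 = q ∧
    L = ∫ t in (0:ℝ)..1, funk n (γ t) (deriv γ t) }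

/-!
For `‖x‖ < 1`, `λ = F(x, y)` is the nonnegative root of `‖λ x + y‖ = λ`, so `F(x, ·)` is the
Minkowski functional of the unit ball recentred at `x`: `‖x + s y‖ ≤ 1` gives `F(x, y) ≤ 1 / s`.
Along the segment `γ t = p + t (q - p)` inside `{‖x‖ ≤ r}` this yields `F(γ, γ') ≤ 1 / (T - t)`
with `T = (1 + r) / (2r)`, whose integral over `[0, 1]` is `log ((1 + r) / (1 - r))`.

Conversely, for a unit vector `u`, pairing `λ x + y` with `u` gives
`F(x, y) ≥ ⟪u, y⟫ / (1 - ⟪u, x⟫)`, the derivative of `-log (1 - ⟪u, γ⟫)` along a curve. Hence every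
curve from `-r u` to `r u` has length at least `log (1 + r) - log (1 - r)`.
-/

open Set
open scoped RealInnerProductSpace

section FunkMetric

variable {n : ℕ} {x y : EuclideanSpace ℝ (Fin n)}

lemma funk_nonneg (hx : ‖x‖ < 1) : 0 ≤ funk n x y := by
  have hX : 0 < 1 - ‖x‖ ^ 2 := by nlinarith [norm_nonneg x]
  refine div_nonneg ?_ hX.le
  have : |⟪x, y⟫| ≤ √((1 - ‖x‖ ^ 2) * ‖y‖ ^ 2 + ⟪x, y⟫ ^ 2) :=
    Real.abs_le_sqrt (by nlinarith [sq_nonneg ‖y‖])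
  linarith [neg_abs_le ⟪x, y⟫]

lemma norm_funk_smul_add (hx : ‖x‖ < 1) : ‖funk n x y • x + y‖ = funk n x y := by
  have hX : 0 < 1 - ‖x‖ ^ 2 := by nlinarith [norm_nonneg x]
  have hF := funk_nonneg (y := y) hx
  rw [← sq_eq_sq₀ (norm_nonneg _) hF, norm_add_sq_real, norm_smul, real_inner_smul_left,
    Real.norm_of_nonneg hF]
  have hS := Real.sq_sqrt (by nlinarith [sq_nonneg ‖y‖, sq_nonneg ⟪x, y⟫] :
    0 ≤ (1 - ‖x‖ ^ 2) * ‖y‖ ^ 2 + ⟪x, y⟫ ^ 2)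
  unfold funk
  field_simp
  linear_combination -(1 - ‖x‖ ^ 2) * hS

lemma funk_le_of_norm_smul_add_le {μ : ℝ} (hx : ‖x‖ < 1) (h : ‖μ • x + y‖ ≤ μ) :
    funk n x y ≤ μ := by
  by_contra! hlt
  have : ‖funk n x y • x + y‖ ≤ ‖μ • x + y‖ + (funk n x y - μ) * ‖x‖ :=
    calc ‖funk n x y • x + y‖ = ‖(μ • x + y) + (funk n x y - μ) • x‖ := by congr 1; module
      _ ≤ ‖μ • x + y‖ + ‖(funk n x y - μ) • x‖ := norm_add_le _ _
      _ = _ := by rw [norm_smul, Real.norm_of_nonneg (sub_nonneg.2 hlt.le)]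
  rw [norm_funk_smul_add hx] at this
  nlinarith [mul_pos (sub_pos.2 hlt) (sub_pos.2 hx)]

lemma funk_le_inv_of_norm_add_smul_le {s : ℝ} (hx : ‖x‖ < 1) (hs : 0 < s) (h : ‖x + s • y‖ ≤ 1) :
    funk n x y ≤ s⁻¹ := by
  refine funk_le_of_norm_smul_add_le hx ?_
  have : s⁻¹ • x + y = s⁻¹ • (x + s • y) := by
    rw [smul_add, smul_smul, inv_mul_cancel₀ hs.ne', one_smul]
  rw [this, norm_smul, Real.norm_of_nonneg (inv_nonneg.2 hs.le)]
  simpa using mul_le_mul_of_nonneg_left h (inv_nonneg.2 hs.le)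

lemma inner_div_le_funk {u : EuclideanSpace ℝ (Fin n)} (hu : ‖u‖ ≤ 1) (hx : ‖x‖ < 1) :
    ⟪u, y⟫ / (1 - ⟪u, x⟫) ≤ funk n x y := by
  have hux : ⟪u, x⟫ < 1 :=
    (real_inner_le_norm u x).trans_lt (by nlinarith [norm_nonneg u, norm_nonneg x])
  rw [div_le_iff₀ (sub_pos.2 hux)]
  have hsupp := real_inner_le_norm u (funk n x y • x + y)
  rw [norm_funk_smul_add hx, inner_add_right, real_inner_smul_right] at hsupp
  nlinarith [mul_le_mul_of_nonneg_right hu (funk_nonneg (y := y) hx)]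

lemma ContinuousOn.funk {γ δ : ℝ → EuclideanSpace ℝ (Fin n)} {s : Set ℝ}
    (hγ : ContinuousOn γ s) (hδ : ContinuousOn δ s) (hball : ∀ t ∈ s, ‖γ t‖ < 1) :
    ContinuousOn (fun t => funk n (γ t) (δ t)) s := by
  have hD : ContinuousOn (fun t => 1 - ‖γ t‖ ^ 2) s := continuousOn_const.sub (hγ.norm.pow 2)
  refine ContinuousOn.div (ContinuousOn.add ?_ (hγ.inner hδ)) hD fun t ht => ?_
  · exact (hD.mul (hδ.norm.pow 2)).add ((hγ.inner hδ).pow 2) |>.sqrt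
  · nlinarith [norm_nonneg (γ t), hball t ht]

end FunkMetric

lemma PiecewiseC1.of_contDiffOn {E : Type*} [NormedAddCommGroup E] [NormedSpace ℝ E]
    {γ : ℝ → E} (h : ContDiffOn ℝ 1 γ (Icc 0 1)) : PiecewiseC1 γ :=
  ⟨1, fun i => i, one_pos, Nat.cast_zero, Nat.cast_one, fun i hi => by simp,
    fun i hi => by interval_cases i; simpa using h⟩

section Curves

variable {n : ℕ} {γ : ℝ → EuclideanSpace ℝ (Fin n)} {a b : ℝ}

lemma intervalIntegrable_funk_deriv (hab : a < b) (hγ : ContDiffOn ℝ 1 γ (Icc a b))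
    (hball : ∀ t ∈ Icc a b, ‖γ t‖ < 1) :
    IntervalIntegrable (fun t => funk n (γ t) (deriv γ t)) volume a b := by
  rw [intervalIntegrable_iff_integrableOn_Icc_of_le hab.le, integrableOn_Icc_iff_integrableOn_Ioo]
  have hcont : ContinuousOn (fun t => funk n (γ t) (derivWithin γ (Icc a b) t)) (Icc a b) :=
    hγ.continuousOn.funk (hγ.continuousOn_derivWithin (uniqueDiffOn_Icc hab) le_rfl) hball
  refine (hcont.integrableOn_Icc.mono_set Ioo_subset_Icc_self).congr_fun (fun t ht => ?_)
    measurableSet_Ioo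
  simp only [derivWithin_of_mem_nhds (Icc_mem_nhds ht.1 ht.2)]

lemma log_sub_log_le_integral_funk_deriv_of_contDiffOn {u : EuclideanSpace ℝ (Fin n)} (hu : ‖u‖ ≤ 1)
    (hab : a < b) (hγ : ContDiffOn ℝ 1 γ (Icc a b)) (hball : ∀ t ∈ Icc a b, ‖γ t‖ < 1) :
    Real.log (1 - ⟪u, γ a⟫) - Real.log (1 - ⟪u, γ b⟫) ≤
      ∫ t in a..b, funk n (γ t) (deriv γ t) := by
  have hpos : ∀ t ∈ Icc a b, 0 < 1 - ⟪u, γ t⟫ := fun t ht => sub_pos.2 <|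
    (real_inner_le_norm u (γ t)).trans_lt
      (by nlinarith [norm_nonneg u, norm_nonneg (γ t), hball t ht])
  have hcont : ContinuousOn (fun t => -Real.log (1 - ⟪u, γ t⟫)) (Icc a b) :=
    ((continuousOn_const.sub (continuousOn_const.inner hγ.continuousOn)).log
      fun t ht => (hpos t ht).ne').neg
  have hderiv : ∀ t ∈ Ioo a b, HasDerivWithinAt (fun t => -Real.log (1 - ⟪u, γ t⟫))
      (⟪u, deriv γ t⟫ / (1 - ⟪u, γ t⟫)) (Ioi t) t := by
    intro t ht
    have hγt : HasDerivAt γ (deriv γ t) t :=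
      ((hγ.differentiableOn one_ne_zero t (Ioo_subset_Icc_self ht)).differentiableAt
        (Icc_mem_nhds ht.1 ht.2)).hasDerivAt
    have hinner : HasDerivAt (fun s => ⟪u, γ s⟫) ⟪u, deriv γ t⟫ t := by
      simpa using (hasDerivAt_const t u).inner ℝ hγt
    have := ((hinner.const_sub 1).log (hpos t (Ioo_subset_Icc_self ht)).ne').neg
    exact (this.congr_deriv (by ring)).hasDerivWithinAt
  have := intervalIntegral.sub_le_integral_of_hasDeriv_right_of_le hab.le hcont hderiv
    ((intervalIntegrable_iff_integrableOn_Icc_of_le hab.le).1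
      (intervalIntegrable_funk_deriv hab hγ hball))
    fun t ht => inner_div_le_funk hu (hball t (Ioo_subset_Icc_self ht))
  linarith

lemma PiecewiseC1.log_sub_log_le_integral_funk_deriv (hγ : PiecewiseC1 γ)
    {u : EuclideanSpace ℝ (Fin n)} (hu : ‖u‖ ≤ 1) (hball : ∀ t ∈ Icc (0 : ℝ) 1, ‖γ t‖ < 1) :
    Real.log (1 - ⟪u, γ 0⟫) - Real.log (1 - ⟪u, γ 1⟫) ≤
      ∫ t in (0 : ℝ)..1, funk n (γ t) (deriv γ t) := by
  obtain ⟨k, τ, -, hτ0, hτk, hτlt, hC⟩ := hγ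
  have hτ : MonotoneOn τ (Iic k) := (strictMonoOn_Iic_of_lt_succ hτlt).monotoneOn
  have hpiece : ∀ i < k, ∀ t ∈ Icc (τ i) (τ (i + 1)), ‖γ t‖ < 1 := fun i hi t ht =>
    hball t ⟨hτ0 ▸ (hτ (Nat.zero_le k) (mem_Iic.2 hi.le) (Nat.zero_le i)).trans ht.1,
      hτk ▸ ht.2.trans (hτ (mem_Iic.2 hi) (mem_Iic.2 le_rfl) hi)⟩
  set G : ℕ → ℝ := fun i => Real.log (1 - ⟪u, γ (τ i)⟫)
  calc Real.log (1 - ⟪u, γ 0⟫) - Real.log (1 - ⟪u, γ 1⟫)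
      = ∑ i ∈ Finset.range k, (G i - G (i + 1)) := by
        rw [Finset.sum_range_sub']
        simp only [G, hτ0, hτk]
    _ ≤ ∑ i ∈ Finset.range k, ∫ t in τ i..τ (i + 1), funk n (γ t) (deriv γ t) :=
        Finset.sum_le_sum fun i hi => log_sub_log_le_integral_funk_deriv_of_contDiffOn hu
          (hτlt i (Finset.mem_range.1 hi)) (hC i (Finset.mem_range.1 hi))
          (hpiece i (Finset.mem_range.1 hi))
    _ = ∫ t in (0 : ℝ)..1, funk n (γ t) (deriv γ t) := by
        rw [intervalIntegral.sum_integral_adjacent_intervals fun i hi =>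
          intervalIntegrable_funk_deriv (hτlt i hi) (hC i hi) (hpiece i hi), hτ0, hτk]

end Curves

section Segment

variable {n : ℕ} {r : ℝ} {p q : EuclideanSpace ℝ (Fin n)}

lemma norm_add_smul_sub_le (hp : ‖p‖ ≤ r) (hq : ‖q‖ ≤ r) {t : ℝ} (ht : t ∈ Icc (0 : ℝ) 1) :
    ‖p + t • (q - p)‖ ≤ r := by
  simpa using (convex_closedBall (0 : EuclideanSpace ℝ (Fin n)) r).add_smul_sub_mem
    (by simpa using hp) (by simpa using hq) ht

lemma integral_funk_segment_le (hr0 : 0 < r) (hr1 : r < 1) (hp : ‖p‖ ≤ r) (hq : ‖q‖ ≤ r) :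
    ∫ t in (0 : ℝ)..1, funk n (p + t • (q - p)) (q - p) ≤ Real.log ((1 + r) / (1 - r)) := by
  set T := (1 + r) / (2 * r) with hT
  have hT1 : 1 < T := by rw [hT, lt_div_iff₀ (by linarith)]; linarith
  have hpos : ∀ t ∈ uIcc (0 : ℝ) 1, 0 < T - t := fun t ht => by
    rw [uIcc_of_le zero_le_one] at ht; linarith [ht.2]
  have hball : ∀ t ∈ uIcc (0 : ℝ) 1, ‖p + t • (q - p)‖ < 1 := fun t ht =>
    (norm_add_smul_sub_le hp hq (by rwa [uIcc_of_le zero_le_one] at ht)).trans_lt hr1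
  -- `T` is chosen so that `γ t + (T - t) • γ' = p + T • (q - p)` has norm at most `(2T - 1) r = 1`.
  have hbound : ∀ t ∈ Icc (0 : ℝ) 1, funk n (p + t • (q - p)) (q - p) ≤ (T - t)⁻¹ := by
    intro t ht
    refine funk_le_inv_of_norm_add_smul_le (hball t (Icc_subset_uIcc ht))
      (hpos t (Icc_subset_uIcc ht)) ?_
    calc ‖p + t • (q - p) + (T - t) • (q - p)‖ = ‖(T - 1) • (-p) + T • q‖ := by congr 1; module
      _ ≤ ‖(T - 1) • (-p)‖ + ‖T • q‖ := norm_add_le _ _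
      _ ≤ (T - 1) * r + T * r := by
        rw [norm_smul, norm_smul, norm_neg, Real.norm_of_nonneg (sub_nonneg.2 hT1.le),
          Real.norm_of_nonneg (zero_lt_one.trans hT1).le]
        gcongr
      _ = 1 := by rw [hT]; field_simp; ring
  calc ∫ t in (0 : ℝ)..1, funk n (p + t • (q - p)) (q - p)
      ≤ ∫ t in (0 : ℝ)..1, (T - t)⁻¹ := by
        refine intervalIntegral.integral_mono_on zero_le_one ?_ ?_ hbound
        · exact (ContinuousOn.funk (by fun_prop) continuousOn_const hball).intervalIntegrable
        · exact (continuousOn_const.sub continuousOn_id).inv₀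
            (fun t ht => (hpos t ht).ne') |>.intervalIntegrable
    _ = Real.log (T / (T - 1)) := by
        rw [intervalIntegral.integral_comp_sub_left (fun t => t⁻¹), sub_zero, integral_inv]
        rw [uIcc_of_le (by linarith)]
        exact fun h => by linarith [h.1]
    _ = Real.log ((1 + r) / (1 - r)) := by
        congr 1
        rw [hT, div_sub_one (by positivity)]
        field_simp
        ring

end Segment

section FunkDist

variable {n : ℕ} {r : ℝ} {p q : EuclideanSpace ℝ (Fin n)}

lemma piecewiseC1_add_smul_sub : PiecewiseC1 (fun t : ℝ => p + t • (q - p)) :=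
  .of_contDiffOn (by fun_prop)

lemma funkDist_le_integral (hr1 : r < 1) {γ : ℝ → EuclideanSpace ℝ (Fin n)} (hγ : PiecewiseC1 γ)
    (hball : ∀ t ∈ Icc (0 : ℝ) 1, ‖γ t‖ ≤ r) :
    funkDist n r (γ 0) (γ 1) ≤ ∫ t in (0 : ℝ)..1, funk n (γ t) (deriv γ t) := by
  refine csInf_le ⟨0, ?_⟩ ⟨γ, hγ, hball, rfl, rfl, rfl⟩
  rintro _ ⟨γ, -, hball, -, -, rfl⟩
  exact intervalIntegral.integral_nonneg zero_le_one fun t ht =>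
    funk_nonneg ((hball t ht).trans_lt hr1)

lemma le_funkDist {c : ℝ} (hp : ‖p‖ ≤ r) (hq : ‖q‖ ≤ r)
    (h : ∀ γ : ℝ → EuclideanSpace ℝ (Fin n), PiecewiseC1 γ → (∀ t ∈ Icc (0 : ℝ) 1, ‖γ t‖ ≤ r) →
      γ 0 = p → γ 1 = q → c ≤ ∫ t in (0 : ℝ)..1, funk n (γ t) (deriv γ t)) :
    c ≤ funkDist n r p q := by
  refine le_csInf ⟨_, _, piecewiseC1_add_smul_sub, fun t ht => norm_add_smul_sub_le hp hq ht,
    by simp, by simp, rfl⟩ ?_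
  rintro _ ⟨γ, hγ, hball, h0, h1, rfl⟩
  exact h γ hγ hball h0 h1

lemma funkDist_le_log (hr0 : 0 < r) (hr1 : r < 1) (hp : ‖p‖ ≤ r) (hq : ‖q‖ ≤ r) :
    funkDist n r p q ≤ Real.log ((1 + r) / (1 - r)) := by
  have hderiv (t : ℝ) : deriv (fun t : ℝ => p + t • (q - p)) t = q - p :=
    (((hasDerivAt_id t).smul_const (q - p)).const_add p).deriv.trans (one_smul ℝ _)
  have := funkDist_le_integral hr1 piecewiseC1_add_smul_sub
    fun t ht => norm_add_smul_sub_le (n := n) hp hq ht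
  simp only [zero_smul, add_zero, one_smul, add_sub_cancel, hderiv] at this
  exact this.trans (integral_funk_segment_le hr0 hr1 hp hq)

lemma funkDist_neg_smul_smul (hr0 : 0 < r) (hr1 : r < 1) {u : EuclideanSpace ℝ (Fin n)}
    (hu : ‖u‖ = 1) : funkDist n r ((-r) • u) (r • u) = Real.log ((1 + r) / (1 - r)) := by
  have hp : ‖(-r) • u‖ ≤ r := by simp [norm_smul, hu, abs_of_pos hr0]
  have hq : ‖r • u‖ ≤ r := by simp [norm_smul, hu, abs_of_pos hr0]
  refine le_antisymm (funkDist_le_log hr0 hr1 hp hq)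
    (le_funkDist hp hq fun γ hγ hball h0 h1 => ?_)
  have := hγ.log_sub_log_le_integral_funk_deriv hu.le fun t ht => (hball t ht).trans_lt hr1
  simp only [h0, h1, real_inner_smul_right, real_inner_self_eq_norm_sq, hu, one_pow, mul_one,
    sub_neg_eq_add] at this
  rwa [← Real.log_div (by linarith) (by linarith)] at this

end FunkDist

/-- The diameter of the closed ball `{|x| ≤ r}`, `0 < r < 1`, with respect to the Funk
distance equals `log((1+r)/(1−r))`. -/
theorem funk_diameter (n : ℕ) (hn : 2 ≤ n) (r : ℝ) (hr0 : 0 < r) (hr1 : r < 1) :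
    sSup { d : ℝ | ∃ p q : EuclideanSpace ℝ (Fin n),
        ‖p‖ ≤ r ∧ ‖q‖ ≤ r ∧ d = funkDist n r p q }
      = Real.log ((1 + r) / (1 - r)) := by
  set u := EuclideanSpace.single (⟨0, by omega⟩ : Fin n) (1 : ℝ)
  have hu : ‖u‖ = 1 := by simp [u]
  refine IsGreatest.csSup_eq ⟨⟨(-r) • u, r • u, by simp [norm_smul, hu, abs_of_pos hr0],
    by simp [norm_smul, hu, abs_of_pos hr0], (funkDist_neg_smul_smul hr0 hr1 hu).symm⟩, ?_⟩
  rintro _ ⟨p, q, hp, hq, rfl⟩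
  exact funkDist_le_log hr0 hr1 hp hq
end
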